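/- arXiv:1902.10540 — 5 statements merged into one kernel-verified Lean document; each statement's English description precedes it below -/
import Mathlib

section
/- Let (X,μ) be a standard probability space with a separating sequence (C_n) of Borel sets, and let 𝒟 be a family of Borel sets whose image in the measure algebra MAlg(X,μ) is dense. Then there exists a full measure Borel subset X' ⊆ X such that 𝒟 separates the points of X': for all distinct x,y ∈ X' there is D ∈ 𝒟 with x ∈ D ↔ ¬(y ∈ D). -/
/-!
Approximating each `C n` in measure by members `D n k ∈ 𝒟` fast enough that
`∑ₖ μ (C n ∆ D n k) < ∞`, Borel–Cantelli shows that almost every point lies in `D n k` exactly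
when it lies in `C n`, for all large `k`. On a full measure set this holds for every `n` at once,
so a set `C n` separating two such points is matched by some `D n k` separating them too.
-/

open MeasureTheory Filter
open scoped ENNReal symmDiff

theorem exists_seq_mem_eventually_iff_ae {X : Type*} [MeasurableSpace X] {μ : Measure X}
    {𝒟 : Set (Set X)} {A : Set X} (hA : ∀ ε : ℝ≥0∞, 0 < ε → ∃ D ∈ 𝒟, μ (A ∆ D) < ε) :
    ∃ D : ℕ → Set X, (∀ k, D k ∈ 𝒟) ∧ ∀ᵐ x ∂μ, ∀ᶠ k in atTop, (x ∈ D k ↔ x ∈ A) := by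
  choose D hD𝒟 hDA using fun k : ℕ => hA (2⁻¹ ^ k) (ENNReal.pow_pos (by simp) k)
  have hsum : ∑' k, μ (A ∆ D k) ≠ ∞ :=
    ne_top_of_le_ne_top (by simp [ENNReal.tsum_geometric, ENNReal.one_sub_inv_two])
      (ENNReal.tsum_le_tsum fun k => (hDA k).le)
  refine ⟨D, hD𝒟, (ae_eventually_notMem hsum).mono fun x hx => hx.mono fun k hk => ?_⟩
  rw [Set.mem_symmDiff] at hk
  tauto

theorem Filter.Eventually.exists_measurableSet_measure_eq_one {X : Type*} [MeasurableSpace X]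
    {μ : Measure X} [IsProbabilityMeasure μ] {p : X → Prop} (h : ∀ᵐ x ∂μ, p x) :
    ∃ X' : Set X, MeasurableSet X' ∧ μ X' = 1 ∧ ∀ x ∈ X', p x := by
  obtain ⟨s, hs, hsm, hp⟩ := h.exists_measurable_mem
  exact ⟨s, hsm, (prob_compl_eq_zero_iff hsm).1 (mem_ae_iff.1 hs), hp⟩

theorem dense_family_separates_points_general
    {X : Type*} [MeasurableSpace X]
    (μ : Measure X) [IsProbabilityMeasure μ]
    (C : ℕ → Set X) (hCmeas : ∀ n, MeasurableSet (C n))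
    (hCsep : ∀ x y : X, x ≠ y → ∃ n, (x ∈ C n ↔ y ∉ C n))
    (𝒟 : Set (Set X))
    (h𝒟dense : ∀ A : Set X, MeasurableSet A → ∀ ε : ℝ≥0∞, 0 < ε →
      ∃ D ∈ 𝒟, μ (symmDiff A D) < ε) :
    ∃ X' : Set X, MeasurableSet X' ∧ μ X' = 1 ∧
      ∀ x ∈ X', ∀ y ∈ X', x ≠ y → ∃ D ∈ 𝒟, (x ∈ D ↔ y ∉ D) := by
  choose D hD𝒟 hDC using fun n => exists_seq_mem_eventually_iff_ae (h𝒟dense (C n) (hCmeas n))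
  obtain ⟨X', hX'meas, hX', hDC'⟩ := (ae_all_iff.2 hDC).exists_measurableSet_measure_eq_one
  refine ⟨X', hX'meas, hX', fun x hx y hy hxy => ?_⟩
  obtain ⟨n, hn⟩ := hCsep x y hxy
  obtain ⟨k, hxk, hyk⟩ := ((hDC' x hx n).and (hDC' y hy n)).exists
  exact ⟨D n k, hD𝒟 n k, by rwa [hxk, hyk]⟩

/-- Let `(X, μ)` be a standard probability space admitting a separating sequence `(C n)` of
measurable sets, and let `𝒟` be a family of measurable sets whose image in the measure
algebra is dense (every measurable set is approximated in `μ`-symmetric-difference by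
members of `𝒟`).  Then there is a full measure measurable subset `X'` whose points are
separated by `𝒟`. -/
theorem dense_family_separates_points
    {X : Type*} [MeasurableSpace X] [StandardBorelSpace X]
    (μ : Measure X) [IsProbabilityMeasure μ]
    (C : ℕ → Set X) (hCmeas : ∀ n, MeasurableSet (C n))
    (hCsep : ∀ x y : X, x ≠ y → ∃ n, (x ∈ C n ↔ y ∉ C n))
    (𝒟 : Set (Set X)) (h𝒟meas : ∀ D ∈ 𝒟, MeasurableSet D)
    (h𝒟dense : ∀ A : Set X, MeasurableSet A → ∀ ε : ℝ≥0∞, 0 < ε →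
      ∃ D ∈ 𝒟, μ (symmDiff A D) < ε) :
    ∃ X' : Set X, MeasurableSet X' ∧ μ X' = 1 ∧
      ∀ x ∈ X', ∀ y ∈ X', x ≠ y → ∃ D ∈ 𝒟, (x ∈ D ↔ y ∉ D) :=
  dense_family_separates_points_general μ C hCmeas hCsep 𝒟 h𝒟dense
end

section
/- Let T be a Borel bijection of a standard Borel space X. Then there is a partition of the support supp T = {x : T(x) ≠ x} into three Borel sets A_1, A_2, A_3 such that T(A_i) ∩ A_i = ∅ for i = 1,2,3. -/
/-!
Join every point `x` of the support to `T x`: each vertex of this Borel graph has at most the two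
neighbours `T x` and `T⁻¹ x`. Coding points by bit sequences, colour `x` by the first position
where the codes of `x` and `T x` differ together with the bit of `x` there; this is a Borel
colouring with countably many colours. Recolouring its levels greedily, one after the other, from
`{0, 1, 2}` keeps the colouring proper and Borel, since a point has only two neighbours to avoid.
The three colour classes are the sets `Aᵢ`.
-/

open Set

def freeColor (a b : Fin 3) : Fin 3 :=
  if a ≠ 0 ∧ b ≠ 0 then 0 else if a ≠ 1 ∧ b ≠ 1 then 1 else 2

lemma freeColor_ne_left (a b : Fin 3) : freeColor a b ≠ a := by
  revert a b; decide

lemma freeColor_ne_right (a b : Fin 3) : freeColor a b ≠ b := by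
  revert a b; decide

section Greedy

variable {X : Type*} (N₁ N₂ : X → X) (c : X → ℕ)

/-- Greedy colouring of the graph `x ∼ N₁ x, N₂ x` along the levels of `c`: the points of level
`n` are coloured at stage `n + 1`. -/
def greedyStage : ℕ → X → Fin 3
  | 0 => fun _ => 0
  | n + 1 => fun x =>
      if c x = n then freeColor (greedyStage n (N₁ x)) (greedyStage n (N₂ x))
      else greedyStage n x

def greedyColor (x : X) : Fin 3 :=
  greedyStage N₁ N₂ c (c x + 1) x

variable {N₁ N₂ c}

lemma greedyStage_of_lt {n : ℕ} {x : X} (h : c x < n) :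
    greedyStage N₁ N₂ c n x = greedyColor N₁ N₂ c x := by
  induction n with
  | zero => omega
  | succ n ih =>
    rcases (Nat.lt_succ_iff.mp h).eq_or_lt with h | h
    · rw [← h]; rfl
    · rw [greedyStage]
      dsimp only
      rw [if_neg h.ne, ih h]

lemma greedyColor_eq (x : X) :
    greedyColor N₁ N₂ c x =
      freeColor (greedyStage N₁ N₂ c (c x) (N₁ x)) (greedyStage N₁ N₂ c (c x) (N₂ x)) := by
  simp [greedyColor, greedyStage]

lemma greedyColor_ne_of_lt {x y : X} (hxy : x = N₁ y ∨ x = N₂ y) (h : c x < c y) :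
    greedyColor N₁ N₂ c x ≠ greedyColor N₁ N₂ c y := by
  rw [greedyColor_eq y]
  rcases hxy with rfl | rfl
  · rw [greedyStage_of_lt h]; exact (freeColor_ne_left _ _).symm
  · rw [greedyStage_of_lt h]; exact (freeColor_ne_right _ _).symm

lemma greedyColor_ne {x y : X} (hxy : x = N₁ y ∨ x = N₂ y) (hyx : y = N₁ x ∨ y = N₂ x)
    (h : c x ≠ c y) : greedyColor N₁ N₂ c x ≠ greedyColor N₁ N₂ c y := by
  rcases h.lt_or_gt with h | h
  · exact greedyColor_ne_of_lt hxy h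
  · exact (greedyColor_ne_of_lt hyx h).symm

variable [MeasurableSpace X]

lemma measurable_greedyStage (hN₁ : Measurable N₁) (hN₂ : Measurable N₂) (hc : Measurable c)
    (n : ℕ) : Measurable (greedyStage N₁ N₂ c n) := by
  induction n with
  | zero => exact measurable_const
  | succ n ih =>
    have hfree : Measurable fun x => freeColor (greedyStage N₁ N₂ c n (N₁ x))
        (greedyStage N₁ N₂ c n (N₂ x)) :=
      (measurable_of_countable (Function.uncurry freeColor)).comp
        ((ih.comp hN₁).prodMk (ih.comp hN₂))
    exact Measurable.ite (hc (measurableSet_singleton n)) hfree ih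

lemma measurable_greedyColor (hN₁ : Measurable N₁) (hN₂ : Measurable N₂) (hc : Measurable c) :
    Measurable (greedyColor N₁ N₂ c) :=
  (measurable_from_prod_countable_left (f := fun p : X × ℕ => greedyStage N₁ N₂ c (p.2 + 1) p.1)
    fun n => measurable_greedyStage hN₁ hN₂ hc (n + 1)).comp (measurable_id.prodMk hc)

end Greedy

theorem exists_measurable_nat_coloring {X : Type*} [MeasurableSpace X]
    [MeasurableSpace.CountablySeparated X] {T : X → X} (hT : Measurable T) :
    ∃ c : X → ℕ, Measurable c ∧ ∀ x, T x ≠ x → c (T x) ≠ c x := by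
  classical
  obtain ⟨f, hf, hf_inj⟩ := MeasurableSpace.measurable_injection_nat_bool_of_countablySeparated X
  have hf_apply (n : ℕ) : Measurable fun x => f x n := (measurable_pi_apply n).comp hf
  let p (n : ℕ) (x : X) : Prop := f x n ≠ f (T x) n ∨ f x = f (T x)
  have hp (x : X) : ∃ n, p n x := by
    by_cases h : f x = f (T x)
    · exact ⟨0, Or.inr h⟩
    · obtain ⟨n, hn⟩ := Function.ne_iff.mp h
      exact ⟨n, Or.inl hn⟩
  have hp_meas (n : ℕ) : MeasurableSet {x | p n x} :=
    (measurableSet_eq_fun (hf_apply n) ((hf_apply n).comp hT)).compl.union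
      (measurableSet_eq_fun hf (hf.comp hT))
  refine ⟨fun x => Encodable.encode (Nat.find (hp x), f x (Nat.find (hp x))),
    Measurable.find (fun n => (measurable_of_countable fun b : Bool => Encodable.encode (n, b)).comp
      (hf_apply n)) hp_meas hp, ?_⟩
  intro x hx hc
  obtain ⟨hn, hbit⟩ := Prod.mk.inj (Encodable.encode_injective hc)
  rcases Nat.find_spec (hp x) with hne | heq
  · rw [hn] at hbit; exact hne hbit.symm
  · exact hx (hf_inj heq).symm

theorem exists_measurable_fin_three_coloring {X : Type*} [MeasurableSpace X]
    [MeasurableSpace.CountablySeparated X] (T : X ≃ᵐ X) :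
    ∃ col : X → Fin 3, Measurable col ∧ ∀ x, T x ≠ x → col (T x) ≠ col x := by
  obtain ⟨c, hc, hcT⟩ := exists_measurable_nat_coloring T.measurable
  refine ⟨greedyColor T T.symm c, measurable_greedyColor T.measurable T.symm.measurable hc,
    fun x hx => greedyColor_ne (Or.inl rfl) (Or.inr (T.symm_apply_apply x).symm) (hcT x hx)⟩

/-- Let `T` be a Borel bijection of a standard Borel space `X`.  Then the support
`{x | T x ≠ x}` can be partitioned into three Borel sets `A₁, A₂, A₃` such that
`T (Aᵢ)` is disjoint from `Aᵢ` for each `i`. -/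
theorem support_partition_three
    {X : Type*} [MeasurableSpace X] [StandardBorelSpace X] (T : X ≃ᵐ X) :
    ∃ A₁ A₂ A₃ : Set X,
      MeasurableSet A₁ ∧ MeasurableSet A₂ ∧ MeasurableSet A₃ ∧
      Disjoint A₁ A₂ ∧ Disjoint A₁ A₃ ∧ Disjoint A₂ A₃ ∧
      A₁ ∪ A₂ ∪ A₃ = {x : X | T x ≠ x} ∧
      Disjoint (T '' A₁) A₁ ∧ Disjoint (T '' A₂) A₂ ∧ Disjoint (T '' A₃) A₃ := by
  obtain ⟨col, hcol, hcolT⟩ := exists_measurable_fin_three_coloring T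
  let A (i : Fin 3) : Set X := {x | T x ≠ x} ∩ col ⁻¹' {i}
  have hA_meas (i : Fin 3) : MeasurableSet (A i) :=
    (measurableSet_eq_fun T.measurable measurable_id).compl.inter (hcol (measurableSet_singleton i))
  have hA_disj {i j : Fin 3} (hij : i ≠ j) : Disjoint (A i) (A j) :=
    ((disjoint_singleton.mpr hij).preimage col).mono inter_subset_right inter_subset_right
  have hA_union : A 0 ∪ A 1 ∪ A 2 = {x | T x ≠ x} := by
    ext x
    simp only [A, mem_union, mem_inter_iff, mem_preimage, mem_singleton_iff]
    generalize col x = i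
    fin_cases i <;> simp
  have hA_image (i : Fin 3) : Disjoint (T '' A i) (A i) := by
    rw [disjoint_left]
    rintro _ ⟨x, ⟨hx, hxi⟩, rfl⟩ ⟨-, hTxi⟩
    exact hcolT x hx (hTxi.trans hxi.symm)
  exact ⟨A 0, A 1, A 2, hA_meas 0, hA_meas 1, hA_meas 2, hA_disj (by decide), hA_disj (by decide),
    hA_disj (by decide), hA_union, hA_image 0, hA_image 1, hA_image 2⟩
end

section
/- Let T be an aperiodic measure-preserving transformation of a standard probability space (X,μ). Then the set of A in the measure algebra MAlg(X,μ) such that the return time of T to A is unbounded (i.e., for every n, the set T^{-n}(A) \ ⋃_{i=0}^{n-1} T^{-i}(A) has positive measure) is a dense G_δ subset of MAlg(X,μ). -/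
/-!
The sets `A` with `μ (T⁻ᵏ A \ ⋃_{i<k} T⁻ⁱ A) > 0` form, for each `k`, an open subset of the
measure algebra, because `A ↦ T⁻ᵏ A \ ⋃_{i<k} T⁻ⁱ A` is `(k+1)`-Lipschitz for `d(A, B) = μ (A ∆ B)`.
It is dense by a Rokhlin-type argument: aperiodicity yields a set `C` of positive measure disjoint
from `T⁻¹ C, …, T⁻ᴺ C`, hence of measure at most `1 / (N + 1)`; replacing `A` by `C` on the tower
`C ∪ ⋯ ∪ T⁻ᵏ C` moves `A` by at most `(k+1) μ C` and makes every point of `T⁻ᵏ C` enter the new set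
for the first time at time `k`.
-/

open MeasureTheory
open scoped ENNReal symmDiff

section

open Set

variable {X : Type*}

def firstEntrance (f : X → X) (A : Set X) (k : ℕ) : Set X :=
  f^[k] ⁻¹' A \ ⋃ i ∈ Finset.range k, f^[i] ⁻¹' A

theorem firstEntrance_subset_union_symmDiff (f : X → X) (A B : Set X) (k : ℕ) :
    firstEntrance f A k ⊆
      firstEntrance f B k ∪ ⋃ i ∈ Finset.range (k + 1), f^[i] ⁻¹' (A ∆ B) := by
  intro x ⟨hxA, hxA'⟩
  simp only [firstEntrance, mem_union, mem_sdiff, mem_iUnion, mem_preimage, Finset.mem_range,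
    mem_symmDiff, exists_prop] at hxA hxA' ⊢
  by_cases hxB : f^[k] x ∈ B
  · by_cases hret : ∃ i < k, f^[i] x ∈ B
    · obtain ⟨i, hik, hiB⟩ := hret
      exact Or.inr ⟨i, by omega, Or.inr ⟨hiB, fun hiA ↦ hxA' ⟨i, hik, hiA⟩⟩⟩
    · exact Or.inl ⟨hxB, hret⟩
  · exact Or.inr ⟨k, by omega, Or.inl ⟨hxA, hxB⟩⟩

theorem firstEntrance_diff_union_of_disjoint {f : X → X} {C : Set X} {k : ℕ}
    (hdisj : ∀ m ∈ Ioc 0 k, Disjoint C (f^[m] ⁻¹' C)) (A : Set X) :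
    f^[k] ⁻¹' C ⊆
      firstEntrance f ((A \ ⋃ i ∈ Finset.range (k + 1), f^[i] ⁻¹' C) ∪ C) k := by
  intro x hx
  refine ⟨Or.inr hx, ?_⟩
  simp only [mem_iUnion, mem_preimage, Finset.mem_range, exists_prop, not_exists, not_and]
  intro i hik hi
  have hreturn : f^[k - i] (f^[i] x) ∈ C := by
    rwa [← Function.iterate_add_apply, Nat.sub_add_cancel hik.le]
  rcases hi with ⟨-, hD⟩ | hC
  · exact hD (mem_iUnion₂.2 ⟨k - i, by omega, hreturn⟩)
  · exact disjoint_left.1 (hdisj (k - i) ⟨by omega, by omega⟩) hC hreturn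

theorem exists_countable_measurableSet_mem_notMem (X : Type*) [MeasurableSpace X]
    [MeasurableSpace.CountablySeparated X] :
    ∃ S : Set (Set X), S.Countable ∧ (∀ s ∈ S, MeasurableSet s) ∧
      ∀ x y, x ≠ y → ∃ s ∈ S, x ∈ s ∧ y ∉ s := by
  obtain ⟨S, hSc, hSm, hS⟩ := exists_countable_separating X MeasurableSet univ
  refine ⟨S ∪ compl '' S, hSc.union (hSc.image _), ?_, fun x y hxy ↦ ?_⟩
  · rintro s (hs | ⟨t, ht, rfl⟩)
    exacts [hSm s hs, (hSm t ht).compl]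
  · obtain ⟨s, hs, hxy⟩ : ∃ s ∈ S, ¬(x ∈ s ↔ y ∈ s) := by
      by_contra! h
      exact hxy (hS x trivial y trivial h)
    by_cases hx : x ∈ s
    · exact ⟨s, Or.inl hs, hx, by tauto⟩
    · exact ⟨sᶜ, Or.inr ⟨s, hs, rfl⟩, hx, by rw [mem_compl_iff, not_not]; tauto⟩

theorem exists_measurableSet_disjoint_preimage_iterate [MeasurableSpace X]
    [MeasurableSpace.CountablySeparated X] {μ : Measure X} [NeZero μ] {f : X → X}
    (hf : Measurable f) {N : ℕ} (haper : ∀ᵐ x ∂μ, ∀ m ∈ Ioc 0 N, f^[m] x ≠ x) :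
    ∃ C, MeasurableSet C ∧ 0 < μ C ∧ ∀ m ∈ Ioc 0 N, Disjoint C (f^[m] ⁻¹' C) := by
  obtain ⟨S, hSc, hSm, hS⟩ := exists_countable_measurableSet_mem_notMem X
  have := hSc.to_subtype
  -- `g m` separates `x` from `f^[m] x` for `x ∈ W g`, so `W g` misses its first `N` preimages
  let W : (Ioc 0 N → S) → Set X := fun g ↦ ⋂ m, (g m : Set X) ∩ f^[m] ⁻¹' (g m : Set X)ᶜ
  have hW : ∀ g, MeasurableSet (W g) := fun g ↦ .iInter fun m ↦
    (hSm _ (g m).2).inter (hf.iterate m (hSm _ (g m).2).compl)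
  have hcover : ∀ᵐ x ∂μ, x ∈ ⋃ g, W g := by
    filter_upwards [haper] with x hx
    choose g hgx hgfx using fun m : Ioc 0 N ↦ hS x (f^[m] x) (hx m m.2).symm
    exact mem_iUnion.2 ⟨fun m ↦ ⟨g m, hgx m⟩, mem_iInter.2 hgfx⟩
  obtain ⟨g, hg⟩ : ∃ g, μ (W g) ≠ 0 := by
    by_contra! h
    obtain ⟨x, hx, hx'⟩ :=
      (hcover.and (measure_eq_zero_iff_ae_notMem.1 (measure_iUnion_null h))).exists
    exact hx' hx
  refine ⟨W g, hW g, pos_iff_ne_zero.2 hg, fun m hm ↦ disjoint_left.2 fun x hx hfx ↦ ?_⟩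
  exact (mem_iInter.1 hx ⟨m, hm⟩).2 (mem_iInter.1 hfx ⟨m, hm⟩).1

namespace MeasureTheory.MeasurePreserving

variable [MeasurableSpace X] {μ : Measure X} {f : X → X}

theorem measure_biUnion_preimage_iterate_le (hf : MeasurePreserving f μ μ) (s : Set X)
    (n : ℕ) : μ (⋃ i ∈ Finset.range n, f^[i] ⁻¹' s) ≤ n * μ s :=
  calc μ (⋃ i ∈ Finset.range n, f^[i] ⁻¹' s)
      ≤ ∑ i ∈ Finset.range n, μ (f^[i] ⁻¹' s) := measure_biUnion_finset_le _ _
    _ ≤ ∑ _i ∈ Finset.range n, μ s :=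
        Finset.sum_le_sum fun i _ ↦ (hf.iterate i).measure_preimage_le s
    _ = n * μ s := by simp

theorem measure_firstEntrance_le (hf : MeasurePreserving f μ μ) (A B : Set X) (k : ℕ) :
    μ (firstEntrance f A k) ≤ μ (firstEntrance f B k) + (k + 1) * μ (A ∆ B) :=
  calc μ (firstEntrance f A k)
      ≤ μ (firstEntrance f B k) + μ (⋃ i ∈ Finset.range (k + 1), f^[i] ⁻¹' (A ∆ B)) :=
        (measure_mono (firstEntrance_subset_union_symmDiff f A B k)).trans
          (measure_union_le _ _)
    _ ≤ μ (firstEntrance f B k) + (k + 1) * μ (A ∆ B) := by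
        grw [hf.measure_biUnion_preimage_iterate_le, Nat.cast_succ]

theorem measure_firstEntrance_pos_of_measure_symmDiff_lt (hf : MeasurePreserving f μ μ)
    {A B : Set X} {k : ℕ} (hAB : μ (A ∆ B) < μ (firstEntrance f A k) / (k + 1)) :
    0 < μ (firstEntrance f B k) := by
  refine pos_iff_ne_zero.2 fun hB ↦ ?_
  have hle := hf.measure_firstEntrance_le A B k
  rw [hB, zero_add, mul_comm] at hle
  exact (hle.trans_lt (ENNReal.mul_lt_of_lt_div hAB)).false

theorem exists_measure_firstEntrance_pos_measure_symmDiff_le (hf : MeasurePreserving f μ μ)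
    {C : Set X} (hC : MeasurableSet C) (hC₀ : 0 < μ C) {k : ℕ}
    (hdisj : ∀ m ∈ Ioc 0 k, Disjoint C (f^[m] ⁻¹' C)) {A : Set X} (hA : MeasurableSet A) :
    ∃ B, MeasurableSet B ∧ 0 < μ (firstEntrance f B k) ∧ μ (A ∆ B) ≤ (k + 1) * μ C := by
  set D := ⋃ i ∈ Finset.range (k + 1), f^[i] ⁻¹' C
  have hCD : C ⊆ D := fun x hx ↦ mem_iUnion₂.2 ⟨0, by simp, hx⟩
  have hD : MeasurableSet D :=
    .biUnion (Finset.countable_toSet _) fun i _ ↦ hf.measurable.iterate i hC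
  refine ⟨(A \ D) ∪ C, (hA.diff hD).union hC, ?_, ?_⟩
  · calc 0 < μ C := hC₀
      _ = μ (f^[k] ⁻¹' C) := ((hf.iterate k).measure_preimage hC.nullMeasurableSet).symm
      _ ≤ _ := measure_mono (firstEntrance_diff_union_of_disjoint hdisj A)
  · have hsub : A ∆ ((A \ D) ∪ C) ⊆ D := by
      intro x hx
      simp only [mem_symmDiff, mem_union, mem_sdiff] at hx
      have := @hCD x
      tauto
    grw [hsub, hf.measure_biUnion_preimage_iterate_le, Nat.cast_succ]

theorem exists_measurableSet_measure_lt_disjoint_preimage_iterate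
    [MeasurableSpace.CountablySeparated X] [IsFiniteMeasure μ] [NeZero μ]
    (hf : MeasurePreserving f μ μ) (haper : ∀ᵐ x ∂μ, ∀ n : ℕ, 1 ≤ n → f^[n] x ≠ x) (k : ℕ)
    {δ : ℝ≥0∞} (hδ : 0 < δ) :
    ∃ C, MeasurableSet C ∧ 0 < μ C ∧ μ C < δ ∧ ∀ m ∈ Ioc 0 k, Disjoint C (f^[m] ⁻¹' C) := by
  obtain ⟨n, hn⟩ := ENNReal.exists_nat_mul_gt hδ.ne' (measure_ne_top μ univ)
  obtain ⟨C, hC, hC₀, hdisj⟩ := exists_measurableSet_disjoint_preimage_iterate hf.measurable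
    (N := max k n) (haper.mono fun x hx m hm ↦ hx m hm.1)
  refine ⟨C, hC, hC₀, ?_, fun m hm ↦ hdisj m ⟨hm.1, hm.2.trans (le_max_left k n)⟩⟩
  by_contra! hδC
  -- pigeonhole: `n` disjoint preimages of measure `μ C ≥ δ` would exceed `μ univ`
  obtain ⟨x, hx, m, hm, hmx⟩ := hf.exists_mem_iterate_mem_of_measure_univ_lt_mul_measure
    hC.nullMeasurableSet (hn.trans_le (by gcongr))
  exact disjoint_left.1 (hdisj m ⟨hm.1, hm.2.le.trans (le_max_right k n)⟩) hx hmx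

end MeasureTheory.MeasurePreserving

end

/-- Let `T` be an aperiodic measure-preserving transformation of a standard probability
space.  Then the set of measurable sets `A` with unbounded return time (for every `n`,
`T⁻ⁿ(A) \ ⋃_{i<n} T⁻ⁱ(A)` has positive measure) is a dense `G_δ` subset of the measure
algebra: it is the intersection, over measurable sets, of countably many families
`G k` each of which is open and dense for the metric `d(A, B) = μ (A ∆ B)`. -/
theorem unbounded_return_time_dense_Gdelta
    {X : Type*} [MeasurableSpace X] [StandardBorelSpace X]
    (μ : Measure X) [IsProbabilityMeasure μ]
    (T : X ≃ᵐ X) (hT : MeasurePreserving T μ μ)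
    (haper : ∀ᵐ x ∂μ, ∀ n : ℕ, 1 ≤ n → (⇑T)^[n] x ≠ x) :
    ∃ G : ℕ → Set (Set X),
      (∀ k, ∀ A ∈ G k, MeasurableSet A) ∧
      -- each `G k` is open in the measure algebra
      (∀ k, ∀ A ∈ G k, ∃ ε : ℝ≥0∞, 0 < ε ∧
        ∀ B : Set X, MeasurableSet B → μ (A ∆ B) < ε → B ∈ G k) ∧
      -- each `G k` is dense in the measure algebra
      (∀ k, ∀ A : Set X, MeasurableSet A → ∀ ε : ℝ≥0∞, 0 < ε →
        ∃ B ∈ G k, μ (A ∆ B) < ε) ∧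
      -- their intersection is exactly the sets with unbounded return time
      (∀ A : Set X, MeasurableSet A →
        ((∀ k, A ∈ G k) ↔
          ∀ n : ℕ, 0 < μ ((⇑T)^[n] ⁻¹' A \ ⋃ i ∈ Finset.range n, (⇑T)^[i] ⁻¹' A))) := by
  refine ⟨fun k ↦ {A | MeasurableSet A ∧ 0 < μ (firstEntrance T A k)}, fun k A hA ↦ hA.1,
    ?_, ?_, fun A hA ↦ ⟨fun h n ↦ (h n).2, fun h k ↦ ⟨hA, h k⟩⟩⟩
  · rintro k A ⟨-, hA₀⟩
    exact ⟨_, ENNReal.div_pos hA₀.ne' (by simp),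
      fun B hB hAB ↦ ⟨hB, hT.measure_firstEntrance_pos_of_measure_symmDiff_lt hAB⟩⟩
  · intro k A hA ε hε
    obtain ⟨C, hC, hC₀, hCε, hdisj⟩ :=
      hT.exists_measurableSet_measure_lt_disjoint_preimage_iterate haper k
        (ENNReal.div_pos hε.ne' (by simp : (k + 1 : ℝ≥0∞) ≠ ⊤))
    obtain ⟨B, hB, hB₀, hAB⟩ :=
      hT.exists_measure_firstEntrance_pos_measure_symmDiff_le hC hC₀ hdisj hA
    exact ⟨B, ⟨hB, hB₀⟩, hAB.trans_lt (by rw [mul_comm]; exact ENNReal.mul_lt_of_lt_div hCε)⟩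
end

section
/- Let G be a group with a right-invariant metric d such that for all K > 0 and all integers N ≥ 1, the N-fold product of the ball B_d(e, K/N) is contained in B_d(e,K), and B_d(e,K) is contained in the (N+1)-fold product of B_d(e, K/N). Then d is large-scale geodesic: there is a constant (e.g. K = 4) such that any g, h ∈ G can be joined by a chain g = x_0, x_1, ..., x_n = h with d(x_i, x_{i+1}) ≤ K and ∑ d(x_i, x_{i+1}) ≤ K d(g,h). -/
open scoped Pointwise

/-!
Write `B c = {g | d g 1 ≤ c}`. Right invariance gives `d (g * h⁻¹) 1 = d g h`, and peeling off
the left factors of a word `a₁ ⋯ aₙ` with `aᵢ ∈ B c` gives a chain from it to `1` with steps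
`≤ c`. For `D = d g h > 0` and `N = ⌈D⌉₊`, the hypothesis puts `g * h⁻¹` in `B (D / N) ^ (N + 1)`:
this yields a chain from `g` to `h` with `N + 1` steps of size `D / N ≤ 1`, of total length
`(N + 1) D / N ≤ 2 D`.
-/

lemma div_natCeil_le_one {D : ℝ} (hD : 0 < D) : D / ⌈D⌉₊ ≤ 1 :=
  (div_le_one (by exact_mod_cast Nat.ceil_pos.2 hD)).2 (Nat.le_ceil D)

lemma natCeil_add_one_mul_div_natCeil_le {D : ℝ} (hD : 0 < D) :
    (⌈D⌉₊ + 1) * (D / ⌈D⌉₊) ≤ 2 * D := by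
  have hN : (1 : ℝ) ≤ ⌈D⌉₊ := by exact_mod_cast Nat.ceil_pos.2 hD
  calc (⌈D⌉₊ + 1) * (D / ⌈D⌉₊) ≤ (2 * ⌈D⌉₊) * (D / ⌈D⌉₊) := by gcongr; linarith
    _ = 2 * D := by field_simp

section RightInvariant

variable {G : Type*} [Group G] {d : G → G → ℝ}

lemma dist_mul_inv_one (hrinv : ∀ g h k : G, d (g * k) (h * k) = d g h) (g h : G) :
    d (g * h⁻¹) 1 = d g h := by
  simpa using (hrinv (g * h⁻¹) 1 h).symm

lemma exists_chain_to_one_of_mem_pow (hrinv : ∀ g h k : G, d (g * k) (h * k) = d g h)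
    {c : ℝ} : ∀ {n : ℕ} {y : G}, y ∈ {g : G | d g 1 ≤ c} ^ n →
      ∃ x : ℕ → G, x 0 = y ∧ x n = 1 ∧ ∀ i < n, d (x i) (x (i + 1)) ≤ c
  | 0, y, hy => ⟨fun _ => 1, (Set.mem_one.1 hy).symm, rfl, by simp⟩
  | n + 1, _, hy => by
    rw [pow_succ'] at hy
    obtain ⟨a, ha, z, hz, rfl⟩ := hy
    obtain ⟨x, hx0, hxn, hstep⟩ := exists_chain_to_one_of_mem_pow hrinv hz
    refine ⟨fun | 0 => a * z | i + 1 => x i, rfl, hxn, ?_⟩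
    rintro (_ | i) hi
    · simpa [hx0] using (hrinv a 1 z).trans_le ha
    · exact hstep i (Nat.succ_lt_succ_iff.1 hi)

lemma exists_chain_of_mul_inv_mem_pow (hrinv : ∀ g h k : G, d (g * k) (h * k) = d g h)
    {c : ℝ} {n : ℕ} {g h : G} (hgh : g * h⁻¹ ∈ {g : G | d g 1 ≤ c} ^ n) :
    ∃ x : ℕ → G, x 0 = g ∧ x n = h ∧ ∀ i < n, d (x i) (x (i + 1)) ≤ c := by
  obtain ⟨x, hx0, hxn, hstep⟩ := exists_chain_to_one_of_mem_pow hrinv hgh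
  refine ⟨fun i => x i * h, by simp [hx0], by simp [hxn], fun i hi => ?_⟩
  simpa only [hrinv] using hstep i hi

end RightInvariant

theorem largeScaleGeodesic_of_ball_product_inclusions_general
    {G : Type*} [Group G] (d : G → G → ℝ)
    (hsymm : ∀ g h : G, d g h = d h g)
    (htri : ∀ g h k : G, d g k ≤ d g h + d h k)
    (hself : ∀ g : G, d g g = 0)
    (hrinv : ∀ g h k : G, d (g * k) (h * k) = d g h)
    (hballs : ∀ K : ℝ, 0 < K → ∀ N : ℕ, 1 ≤ N →
      ({g : G | d g 1 ≤ K / N} ^ N ⊆ {g : G | d g 1 ≤ K}) ∧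
      ({g : G | d g 1 ≤ K} ⊆ {g : G | d g 1 ≤ K / N} ^ (N + 1))) :
    ∃ K : ℝ, 0 < K ∧ ∀ g h : G, ∃ (n : ℕ) (x : ℕ → G),
      x 0 = g ∧ x n = h ∧
      (∀ i < n, d (x i) (x (i + 1)) ≤ K) ∧
      (∑ i ∈ Finset.range n, d (x i) (x (i + 1))) ≤ K * d g h := by
  refine ⟨2, two_pos, fun g h => ?_⟩
  have hnonneg : 0 ≤ d g h := by linarith [htri g h g, hself g, hsymm g h]
  rcases hnonneg.eq_or_lt with hzero | hpos
  · refine ⟨1, fun i => if i = 0 then g else h, rfl, rfl, ?_, by simp [← hzero]⟩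
    intro i hi
    simp [Nat.lt_one_iff.1 hi, ← hzero]
  · set N := ⌈d g h⌉₊
    have hmem : g * h⁻¹ ∈ {k : G | d k 1 ≤ d g h / N} ^ (N + 1) :=
      (hballs _ hpos N (Nat.ceil_pos.2 hpos)).2 (dist_mul_inv_one hrinv g h).le
    obtain ⟨x, hx0, hxn, hstep⟩ := exists_chain_of_mul_inv_mem_pow hrinv hmem
    refine ⟨N + 1, x, hx0, hxn,
      fun i hi => (hstep i hi).trans ((div_natCeil_le_one hpos).trans one_le_two), ?_⟩
    calc ∑ i ∈ Finset.range (N + 1), d (x i) (x (i + 1))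
        ≤ (N + 1) * (d g h / N) := by
          simpa using Finset.sum_le_card_nsmul _ _ _ fun i hi => hstep i (Finset.mem_range.1 hi)
      _ ≤ 2 * d g h := natCeil_add_one_mul_div_natCeil_le hpos

/-- Let `G` be a group with a right-invariant metric `d` such that for every `K > 0` and
every `N ≥ 1`, the `N`-fold (pointwise) product of the ball `B(e, K/N)` is contained in
`B(e, K)`, and `B(e, K)` is contained in the `(N+1)`-fold product of `B(e, K/N)`.
Then `d` is large-scale geodesic: there is a constant `K > 0` such that any `g, h` are
joined by a chain with steps `≤ K` and total length `≤ K · d(g, h)`. -/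
theorem largeScaleGeodesic_of_ball_product_inclusions
    {G : Type*} [Group G] (d : G → G → ℝ)
    (hsymm : ∀ g h : G, d g h = d h g)
    (htri : ∀ g h k : G, d g k ≤ d g h + d h k)
    (hself : ∀ g : G, d g g = 0)
    (hsep : ∀ g h : G, d g h = 0 → g = h)
    (hrinv : ∀ g h k : G, d (g * k) (h * k) = d g h)
    (hballs : ∀ K : ℝ, 0 < K → ∀ N : ℕ, 1 ≤ N →
      ({g : G | d g 1 ≤ K / N} ^ N ⊆ {g : G | d g 1 ≤ K}) ∧
      ({g : G | d g 1 ≤ K} ⊆ {g : G | d g 1 ≤ K / N} ^ (N + 1))) :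
    ∃ K : ℝ, 0 < K ∧ ∀ g h : G, ∃ (n : ℕ) (x : ℕ → G),
      x 0 = g ∧ x n = h ∧
      (∀ i < n, d (x i) (x (i + 1)) ≤ K) ∧
      (∑ i ∈ Finset.range n, d (x i) (x (i + 1))) ≤ K * d g h :=
  largeScaleGeodesic_of_ball_product_inclusions_general d hsymm htri hself hrinv hballs
end

section
/- Let (p_n) be the sequence of primes (p_0 = 2) and (k_n) a sequence of integers with k_n ≥ 4^{n·2^n + 2^n}. Then for every n ≥ 1, (∏_{i<n} p_i) · (∑_{i≥n} p_i/k_i) ≤ 2^{-n·2^n}. -/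
/-!
Bertrand's postulate gives `p (i + 1) ≤ 2 p i`, hence `p i ≤ 2 ^ 2 ^ i` and
`∏_{i<n} p i ≤ 2 ^ 2 ^ n`. Each tail term is then at most `2 ^ (-(2m+1)·2^m)`, and since this
exponent grows by at least one per step, the tail sum is at most twice its first term
`2 ^ (-(2n+1)·2^n)`.
-/

open Finset

lemma nth_prime_succ_le_two_mul (i : ℕ) :
    Nat.nth Nat.Prime (i + 1) ≤ 2 * Nat.nth Nat.Prime i := by
  obtain ⟨q, hq, hlt, hle⟩ :=
    Nat.exists_prime_lt_and_le_two_mul _ (Nat.prime_nth_prime i).ne_zero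
  refine le_trans ?_ hle
  by_contra! h
  exact hlt.not_ge (Nat.le_nth_of_lt_nth_succ h hq)

lemma nth_prime_le_two_pow_two_pow (i : ℕ) : Nat.nth Nat.Prime i ≤ 2 ^ 2 ^ i := by
  induction i with
  | zero => simp [Nat.nth_prime_zero_eq_two]
  | succ i ih =>
    calc Nat.nth Nat.Prime (i + 1) ≤ 2 * 2 ^ 2 ^ i :=
          (nth_prime_succ_le_two_mul i).trans (by omega)
      _ = 2 ^ (2 ^ i + 1) := by ring
      _ ≤ 2 ^ 2 ^ (i + 1) :=
        Nat.pow_le_pow_right two_pos (by rw [pow_succ]; linarith [Nat.one_le_two_pow (n := i)])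

lemma prod_range_nth_prime_le_two_pow_two_pow (n : ℕ) :
    ∏ i ∈ range n, Nat.nth Nat.Prime i ≤ 2 ^ 2 ^ n := by
  induction n with
  | zero => simp
  | succ n ih =>
    calc ∏ i ∈ range (n + 1), Nat.nth Nat.Prime i ≤ 2 ^ 2 ^ n * 2 ^ 2 ^ n := by
          rw [prod_range_succ]
          exact Nat.mul_le_mul ih (nth_prime_le_two_pow_two_pow n)
      _ = 2 ^ 2 ^ (n + 1) := by ring

lemma nth_prime_div_le_of_four_pow_le {m k : ℕ} (hk : 4 ^ (m * 2 ^ m + 2 ^ m) ≤ k) :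
    (Nat.nth Nat.Prime m : ℝ) / k ≤ ((2 : ℝ) ^ ((2 * m + 1) * 2 ^ m))⁻¹ := by
  have hp : (Nat.nth Nat.Prime m : ℝ) ≤ 2 ^ 2 ^ m := by
    exact_mod_cast nth_prime_le_two_pow_two_pow m
  have hk' : (2 : ℝ) ^ (2 ^ m + (2 * m + 1) * 2 ^ m) ≤ k := by
    have : 2 ^ m + (2 * m + 1) * 2 ^ m = 2 * (m * 2 ^ m + 2 ^ m) := by ring
    rw [this, pow_mul]
    exact_mod_cast hk
  calc (Nat.nth Nat.Prime m : ℝ) / k ≤ 2 ^ 2 ^ m / 2 ^ (2 ^ m + (2 * m + 1) * 2 ^ m) :=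
        div_le_div₀ (by positivity) hp (by positivity) hk'
    _ = ((2 : ℝ) ^ ((2 * m + 1) * 2 ^ m))⁻¹ := by rw [pow_add]; field_simp

lemma tsum_le_two_mul_of_le_geometric {f : ℕ → ℝ} {C : ℝ} (hf₀ : ∀ i, 0 ≤ f i)
    (hf : ∀ i, f i ≤ C * 2⁻¹ ^ i) : ∑' i, f i ≤ 2 * C := by
  have hg : Summable fun i : ℕ ↦ C * (2 : ℝ)⁻¹ ^ i :=
    (summable_geometric_of_lt_one (by norm_num) (by norm_num)).mul_left C
  calc ∑' i, f i ≤ ∑' i : ℕ, C * (2 : ℝ)⁻¹ ^ i :=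
        (hg.of_nonneg_of_le hf₀ hf).tsum_le_tsum hf hg
    _ = 2 * C := by rw [tsum_mul_left, tsum_geometric_inv_two, mul_comm]

lemma tail_exponent_le (n i : ℕ) :
    (2 * n + 1) * 2 ^ n + i ≤ (2 * (n + i) + 1) * 2 ^ (n + i) := by
  have hi : i < 2 ^ (n + i) :=
    Nat.lt_two_pow_self.trans_le (Nat.pow_le_pow_right two_pos (by omega))
  have hn : 2 ^ n ≤ 2 ^ (n + i) := Nat.pow_le_pow_right two_pos (by omega)
  nlinarith

lemma two_pow_inv_le_geometric (n i : ℕ) :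
    ((2 : ℝ) ^ ((2 * (n + i) + 1) * 2 ^ (n + i)))⁻¹ ≤
      ((2 : ℝ) ^ ((2 * n + 1) * 2 ^ n))⁻¹ * 2⁻¹ ^ i := by
  rw [← inv_pow, ← inv_pow, ← pow_add]
  exact pow_le_pow_of_le_one (by norm_num) (by norm_num) (tail_exponent_le n i)

lemma two_pow_two_pow_mul_le {n : ℕ} (hn : 1 ≤ n) :
    (2 : ℝ) ^ 2 ^ n * (2 * ((2 : ℝ) ^ ((2 * n + 1) * 2 ^ n))⁻¹) ≤
      ((2 : ℝ) ^ (n * 2 ^ n))⁻¹ := by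
  rw [← div_eq_mul_inv, mul_div_assoc', div_le_iff₀ (by positivity), inv_mul_eq_div,
    le_div_iff₀ (by positivity), ← pow_succ, ← pow_add]
  apply pow_le_pow_right₀ one_le_two
  nlinarith [Nat.one_le_two_pow (n := n)]

/-- Let `p i` denote the `i`-th prime (`p 0 = 2`) and `(k i)` a sequence of integers
with `k i ≥ 4 ^ (i·2ⁱ + 2ⁱ)`.  Then for every `n ≥ 1`,
`(∏_{i<n} p i) · (∑_{i≥n} p i / k i) ≤ 2 ^ (-n·2ⁿ)`. -/
theorem prime_product_tail_sum_bound
    (k : ℕ → ℕ) (hk : ∀ i : ℕ, 4 ^ (i * 2 ^ i + 2 ^ i) ≤ k i)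
    (n : ℕ) (hn : 1 ≤ n) :
    (∏ i ∈ Finset.range n, (Nat.nth Nat.Prime i : ℝ)) *
      (∑' i : ℕ, (Nat.nth Nat.Prime (n + i) : ℝ) / (k (n + i) : ℝ)) ≤
    ((2 : ℝ) ^ (n * 2 ^ n))⁻¹ := by
  have hprod : ∏ i ∈ range n, (Nat.nth Nat.Prime i : ℝ) ≤ 2 ^ 2 ^ n := by
    exact_mod_cast prod_range_nth_prime_le_two_pow_two_pow n
  have htail : ∑' i : ℕ, (Nat.nth Nat.Prime (n + i) : ℝ) / (k (n + i) : ℝ) ≤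
      2 * ((2 : ℝ) ^ ((2 * n + 1) * 2 ^ n))⁻¹ :=
    tsum_le_two_mul_of_le_geometric (fun i ↦ by positivity) fun i ↦
      (nth_prime_div_le_of_four_pow_le (hk (n + i))).trans (two_pow_inv_le_geometric n i)
  calc _ ≤ (2 : ℝ) ^ 2 ^ n * (2 * ((2 : ℝ) ^ ((2 * n + 1) * 2 ^ n))⁻¹) :=
        mul_le_mul hprod htail (tsum_nonneg fun i ↦ by positivity) (by positivity)
    _ ≤ _ := two_pow_two_pow_mul_le hn
end
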